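/- Define 𝔻: Λ*E ⊗ Λ*E → Λ*E ⊗ Λ*E by 𝔻(x⊗y) = x⊗y + xθ⊗θ̄y − xθ̄⊗θy − xρ⊗ρy (all products taken in 𝒩; these operations preserve Λ*E). Let V = ℝ⁴ with basis a₁, b₁, a₂, b₂, and let [D] be the linear automorphism of V with [D]a₁ = a₁, [D]a₂ = a₂, [D]b₁ = b₁ − a₂, [D]b₂ = b₂ − a₁. Let φ: Λ*E → Λ*(ℝ²) be the linear isomorphism with φ(1) = b, φ(ρ) = a, φ(θ) = a∧b, φ(θ̄) = 1; let φ_i (i = 1,2) be φ followed by the map of exterior algebras induced by the inclusion a ↦ a_i, b ↦ b_i into V; and let d: {1, θ, θ̄, ρ} → {0,1} be given by d(1) = d(ρ) = 1 and d(θ) = d(θ̄) = 0 (the mod-2 degree of φ(x)). Define ξ₂: Λ*E ⊗ Λ*E → Λ*V on basis tensors by ξ₂(x⊗y) := (−1)^{d(x)·(1−d(y))}·φ₁(x) ∧ φ₂(y), extended linearly. Then ξ₂ ∘ 𝔻 = Λ*([D]) ∘ ξ₂, where Λ*([D]) is the induced algebra automorphism of Λ*V. -/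

import Mathlib

/-!
Both sides are linear in `z`, so it suffices to compare them on the sixteen basis tensors
`x ⊗ y`. Since `θ` and `θ̄` square to zero and anticommute, `ρ` annihilates `θ`, `θ̄` and
`ρ` from either side, and `𝔻 (x ⊗ y)` collapses to at most four terms. On the other side,
`Λ*([D])` replaces `b₁` by `b₁ − a₂` and `b₂` by `b₂ − a₁`, and expanding
`Λ*([D]) (φ₁ x ∧ φ₂ y)` reproduces those terms with the signs `(−1)^{d(x)(1−d(y))}`.
-/

noncomputable section

open TensorProduct

/-- The quadratic form `q(x₀,x₁,x₂) = x₀²` on `ℝ³`. -/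
def Nform : QuadraticForm ℝ (Fin 3 → ℝ) :=
  QuadraticMap.weightedSumSquares ℝ (fun i : Fin 3 => if i = 0 then (1 : ℝ) else 0)

/-- The algebra `𝒩 = ℤ/2 ⋉ Λ*ℝ²`, realized as the Clifford algebra of `Nform`. -/
abbrev NA := CliffordAlgebra Nform

/-- The generator `K`. -/
def K : NA := CliffordAlgebra.ι Nform (Pi.single 0 1)

/-- The generator `θ`. -/
def θ : NA := CliffordAlgebra.ι Nform (Pi.single 1 1)

/-- The generator `θ̄`. -/
def θb : NA := CliffordAlgebra.ι Nform (Pi.single 2 1)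

/-- `ρ := θ̄θ`. -/
def ρ : NA := θb * θ

/-- `V = ℝ⁴` with basis `a₁ = e₀, b₁ = e₁, a₂ = e₂, b₂ = e₃`. -/
abbrev V4 := Fin 4 → ℝ

/-- The exterior algebra `Λ*V`. -/
abbrev ΛV := ExteriorAlgebra ℝ V4

/-- The basis vectors of `V` inside `Λ*V`. -/
def e (i : Fin 4) : ΛV := ExteriorAlgebra.ι ℝ (Pi.single i 1)

/-- The basis `1, θ, θ̄, ρ` of `Λ*E ⊆ 𝒩`. -/
def bas : Fin 4 → NA := ![1, θ, θb, ρ]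

/-- The mod-2 degrees `d(1) = d(ρ) = 1`, `d(θ) = d(θ̄) = 0` of the images under `φ`. -/
def dg : Fin 4 → ℕ := ![1, 0, 0, 1]

/-- `φ₁`: the images `φ(1) = b₁, φ(θ) = a₁∧b₁, φ(θ̄) = 1, φ(ρ) = a₁` of the basis. -/
def img1 : Fin 4 → ΛV := ![e 1, e 0 * e 1, 1, e 0]

/-- `φ₂`: the images `φ(1) = b₂, φ(θ) = a₂∧b₂, φ(θ̄) = 1, φ(ρ) = a₂` of the basis. -/
def img2 : Fin 4 → ΛV := ![e 3, e 2 * e 3, 1, e 2]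

/-- The map `𝔻(x⊗y) = x⊗y + xθ⊗θ̄y − xθ̄⊗θy − xρ⊗ρy`. -/
def 𝔻 : NA ⊗[ℝ] NA →ₗ[ℝ] NA ⊗[ℝ] NA :=
  LinearMap.id
    + TensorProduct.map (LinearMap.mulRight ℝ θ) (LinearMap.mulLeft ℝ θb)
    - TensorProduct.map (LinearMap.mulRight ℝ θb) (LinearMap.mulLeft ℝ θ)
    - TensorProduct.map (LinearMap.mulRight ℝ ρ) (LinearMap.mulLeft ℝ ρ)

/-- The linear automorphism `[D]` of `V` with `[D]a₁ = a₁`, `[D]a₂ = a₂`,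
`[D]b₁ = b₁ − a₂`, `[D]b₂ = b₂ − a₁` (in the basis order `a₁, b₁, a₂, b₂`). -/
def Dmap : V4 →ₗ[ℝ] V4 :=
  Matrix.toLin' !![1, 0, 0, -1; 0, 1, 0, 0; 0, -1, 1, 0; 0, 0, 0, 1]

lemma Nform_single_of_ne_zero {i : Fin 3} (hi : i ≠ 0) (c : ℝ) : Nform (Pi.single i c) = 0 := by
  simp [Nform, QuadraticMap.weightedSumSquares_apply, Pi.single_apply, hi]

lemma Nform_isOrtho_single_one_two : Nform.IsOrtho (Pi.single 1 1) (Pi.single 2 1) := by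
  simp [QuadraticMap.isOrtho_def, Nform, QuadraticMap.weightedSumSquares_apply, Pi.single_apply]

lemma θ_mul_θ : θ * θ = 0 := by
  rw [θ, CliffordAlgebra.ι_sq_scalar, Nform_single_of_ne_zero (by decide), map_zero]

lemma θb_mul_θb : θb * θb = 0 := by
  rw [θb, CliffordAlgebra.ι_sq_scalar, Nform_single_of_ne_zero (by decide), map_zero]

lemma θb_mul_θ : θb * θ = ρ := rfl

lemma θ_mul_θb : θ * θb = -ρ :=
  CliffordAlgebra.ι_mul_ι_comm_of_isOrtho Nform_isOrtho_single_one_two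

lemma θ_mul_ρ : θ * ρ = 0 := by
  rw [ρ, ← mul_assoc, θ_mul_θb, ρ, neg_mul, mul_assoc, θ_mul_θ, mul_zero, neg_zero]

lemma ρ_mul_θ : ρ * θ = 0 := by rw [ρ, mul_assoc, θ_mul_θ, mul_zero]

lemma θb_mul_ρ : θb * ρ = 0 := by rw [ρ, ← mul_assoc, θb_mul_θb, zero_mul]

lemma ρ_mul_θb : ρ * θb = 0 := by rw [ρ, mul_assoc, θ_mul_θb, mul_neg, θb_mul_ρ, neg_zero]

lemma ρ_mul_ρ : ρ * ρ = 0 := by rw [ρ, mul_assoc, ← ρ, θ_mul_ρ, mul_zero]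

lemma 𝔻_tmul (x y : NA) :
    𝔻 (x ⊗ₜ y) = x ⊗ₜ y + (x * θ) ⊗ₜ (θb * y) - (x * θb) ⊗ₜ (θ * y) - (x * ρ) ⊗ₜ (ρ * y) :=
  rfl

lemma e_mul_self (i : Fin 4) : e i * e i = 0 := ExteriorAlgebra.ι_sq_zero _

lemma e_mul_e_mul_self (i : Fin 4) (x : ΛV) : e i * (e i * x) = 0 := by
  rw [← mul_assoc, e_mul_self, zero_mul]

lemma e_mul_e_anticomm (i j : Fin 4) : e j * e i = -(e i * e j) :=
  CliffordAlgebra.ι_mul_ι_comm_of_isOrtho (.all _ _)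

lemma e_mul_e_mul_anticomm (i j : Fin 4) (x : ΛV) : e j * (e i * x) = -(e i * (e j * x)) :=
  CliffordAlgebra.ι_mul_ι_mul_of_isOrtho x (.all _ _)

lemma map_Dmap_e_zero : ExteriorAlgebra.map Dmap (e 0) = e 0 := by
  rw [e, ExteriorAlgebra.map_apply_ι]
  congr 1
  ext k
  fin_cases k <;> simp [Dmap, Matrix.toLin'_apply, Matrix.mulVec, dotProduct, Fin.sum_univ_four]

lemma map_Dmap_e_one : ExteriorAlgebra.map Dmap (e 1) = e 1 - e 2 := by
  unfold e
  rw [ExteriorAlgebra.map_apply_ι, ← map_sub]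
  congr 1
  ext k
  fin_cases k <;> simp [Dmap, Matrix.toLin'_apply, Matrix.mulVec, dotProduct, Fin.sum_univ_four]

lemma map_Dmap_e_two : ExteriorAlgebra.map Dmap (e 2) = e 2 := by
  rw [e, ExteriorAlgebra.map_apply_ι]
  congr 1
  ext k
  fin_cases k <;> simp [Dmap, Matrix.toLin'_apply, Matrix.mulVec, dotProduct, Fin.sum_univ_four]

lemma map_Dmap_e_three : ExteriorAlgebra.map Dmap (e 3) = e 3 - e 0 := by
  unfold e
  rw [ExteriorAlgebra.map_apply_ι, ← map_sub]
  congr 1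
  ext k
  fin_cases k <;> simp [Dmap, Matrix.toLin'_apply, Matrix.mulVec, dotProduct, Fin.sum_univ_four]

lemma apply_𝔻_bas_tmul (ξ₂ : NA ⊗[ℝ] NA →ₗ[ℝ] ΛV)
    (hξ : ∀ i j : Fin 4, ξ₂ (bas i ⊗ₜ[ℝ] bas j)
            = ((-1 : ℝ)) ^ (dg i * (1 - dg j)) • (img1 i * img2 j)) (i j : Fin 4) :
    ξ₂ (𝔻 (bas i ⊗ₜ bas j)) = ExteriorAlgebra.map Dmap (ξ₂ (bas i ⊗ₜ bas j)) := by
  simp only [Fin.forall_fin_succ, bas, dg, img1, img2] at hξ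
  simp only [Fin.isValue, Matrix.cons_val_zero, Matrix.cons_val_one, Matrix.cons_val,
    Matrix.cons_val_succ, Matrix.cons_val_fin_one, Fin.succ_zero_eq_one, Fin.succ_one_eq_two,
    Fin.reduceSucc, tsub_self, tsub_zero, mul_zero, mul_one, one_mul, pow_zero, pow_one, one_smul,
    neg_smul, IsEmpty.forall_iff, and_true] at hξ
  fin_cases i <;> fin_cases j <;>
    simp only [𝔻_tmul, bas, Fin.isValue, Fin.zero_eta, Fin.mk_one, Fin.reduceFinMk,
      Matrix.cons_val, one_mul, mul_one, θ_mul_θ, θb_mul_θb, θ_mul_θb, θb_mul_θ, θ_mul_ρ, ρ_mul_θ,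
      θb_mul_ρ, ρ_mul_θb, ρ_mul_ρ, zero_tmul, tmul_zero, neg_tmul, tmul_neg,
      map_add, map_sub, map_neg, map_zero, hξ,
      map_mul, map_one, map_Dmap_e_zero, map_Dmap_e_one, map_Dmap_e_two, map_Dmap_e_three,
      mul_sub, sub_mul, mul_neg, mul_zero, mul_assoc, e_mul_self, e_mul_e_mul_self,
      e_mul_e_anticomm 0 1, e_mul_e_anticomm 0 2, e_mul_e_mul_anticomm 0 1,
      e_mul_e_mul_anticomm 0 2] <;>
    abel

/-- with `ξ₂` the linear map determined on basis tensors of `Λ*E ⊗ Λ*E`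
by `ξ₂(x⊗y) = (−1)^{d(x)(1−d(y))}·φ₁(x)∧φ₂(y)`, one has `ξ₂ ∘ 𝔻 = Λ*([D]) ∘ ξ₂`
on `Λ*E ⊗ Λ*E` (the span of the basis tensors). -/
theorem stmt14
    (ξ₂ : NA ⊗[ℝ] NA →ₗ[ℝ] ΛV)
    (hξ : ∀ i j : Fin 4, ξ₂ (bas i ⊗ₜ[ℝ] bas j)
            = ((-1 : ℝ)) ^ (dg i * (1 - dg j)) • (img1 i * img2 j)) :
    ∀ z ∈ Submodule.span ℝ
        (Set.range fun p : Fin 4 × Fin 4 => bas p.1 ⊗ₜ[ℝ] bas p.2),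
      ξ₂ (𝔻 z) = (ExteriorAlgebra.map Dmap) (ξ₂ z) := by
  have hbasis : Set.EqOn (ξ₂ ∘ₗ 𝔻) ((ExteriorAlgebra.map Dmap).toLinearMap ∘ₗ ξ₂)
      (Set.range fun p : Fin 4 × Fin 4 => bas p.1 ⊗ₜ[ℝ] bas p.2) := by
    rintro _ ⟨⟨i, j⟩, rfl⟩
    exact apply_𝔻_bas_tmul ξ₂ hξ i j
  exact fun z hz => LinearMap.eqOn_span' hbasis hz
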